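/- arXiv:1811.05443 — 4 statements merged into one kernel-verified Lean document; each statement's English description precedes it below -/
import Mathlib

section
/- For every hypothesis h ∈ H, the target expected error satisfies ε_t(h) ≤ ε_s(h) + (1/2)·d_{HΔH}(P_s, P_t) + λ, where λ = inf_{h' ∈ H} (ε_s(h') + ε_t(h')). -/
/-!
For any `h' ∈ H`, the triangle inequality for disagreement sets gives
`ε_t(h) ≤ P_t{h ≠ h'} + ε_t(h')` and `P_s{h ≠ h'} ≤ ε_s(h) + ε_s(h')`, while
`P_t{h ≠ h'} - P_s{h ≠ h'}` is at most half the `HΔH`-distance. Chaining these bounds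
and taking the infimum over `h'` gives the theorem.
-/

open MeasureTheory

theorem Set.setOf_ne_subset_union {X β : Type*} (a b c : X → β) :
    {x | a x ≠ b x} ⊆ {x | a x ≠ c x} ∪ {x | c x ≠ b x} := by
  intro x hab
  by_cases hac : a x = c x
  · exact Or.inr fun hcb => hab (hac.trans hcb)
  · exact Or.inl hac

namespace MeasureTheory

variable {X β : Type*} [MeasurableSpace X]

theorem measureReal_setOf_ne_le (μ : Measure X) [IsFiniteMeasure μ] (a b c : X → β) :
    μ.real {x | a x ≠ b x} ≤ μ.real {x | a x ≠ c x} + μ.real {x | c x ≠ b x} :=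
  (measureReal_mono (Set.setOf_ne_subset_union a b c)).trans (measureReal_union_le _ _)

theorem abs_measureReal_sub_measureReal_le_one (μ ν : Measure X)
    [IsProbabilityMeasure μ] [IsProbabilityMeasure ν] (s : Set X) :
    |μ.real s - ν.real s| ≤ 1 :=
  abs_sub_le_of_nonneg_of_le measureReal_nonneg measureReal_le_one
    measureReal_nonneg measureReal_le_one

theorem measureReal_setOf_ne_le_transfer (μ ν : Measure X)
    [IsFiniteMeasure μ] [IsFiniteMeasure ν] (h h' f g : X → β) :
    ν.real {x | h x ≠ g x} ≤ μ.real {x | h x ≠ f x}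
      + |μ.real {x | h x ≠ h' x} - ν.real {x | h x ≠ h' x}|
      + (μ.real {x | h' x ≠ f x} + ν.real {x | h' x ≠ g x}) := by
  have target := measureReal_setOf_ne_le ν h g h'
  have source := measureReal_setOf_ne_le μ h h' f
  have shift := neg_abs_le (μ.real {x | h x ≠ h' x} - ν.real {x | h x ≠ h' x})
  simp_rw [ne_comm (a := f _)] at source
  linarith

end MeasureTheory

theorem target_error_bound_general
    {X : Type*} [MeasurableSpace X]
    (Ps Pt : Measure X) [IsProbabilityMeasure Ps] [IsProbabilityMeasure Pt]
    (H : Set (X → Bool))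
    (fs ft : X → Bool)
    (h : X → Bool) (hh : h ∈ H) :
    (Pt {x | h x ≠ ft x}).toReal ≤
      (Ps {x | h x ≠ fs x}).toReal
      + (1 / 2) * (2 * ⨆ p : H × H,
          |(Ps {x | (p.1 : X → Bool) x ≠ (p.2 : X → Bool) x}).toReal
            - (Pt {x | (p.1 : X → Bool) x ≠ (p.2 : X → Bool) x}).toReal|)
      + ⨅ h' : H, ((Ps {x | (h' : X → Bool) x ≠ fs x}).toReal
          + (Pt {x | (h' : X → Bool) x ≠ ft x}).toReal) := by
  have : Nonempty H := ⟨⟨h, hh⟩⟩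
  simp only [← measureReal_def]
  rw [one_div, inv_mul_cancel_left₀ two_ne_zero, ← sub_le_iff_le_add']
  set gap : H × H → ℝ := fun p =>
    |(Ps.real {x | (p.1 : X → Bool) x ≠ (p.2 : X → Bool) x})
      - Pt.real {x | (p.1 : X → Bool) x ≠ (p.2 : X → Bool) x}|
  have hbdd : BddAbove (Set.range gap) :=
    ⟨1, Set.forall_mem_range.2 fun _ => abs_measureReal_sub_measureReal_le_one Ps Pt _⟩
  refine le_ciInf fun h' => ?_
  have hgap := le_ciSup hbdd ⟨⟨h, hh⟩, h'⟩
  have hcomp := measureReal_setOf_ne_le_transfer Ps Pt h h' fs ft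
  linarith

/-- Ben-David et al. bound: for every hypothesis `h ∈ H`, the target error is
bounded by the source error plus half the `HΔH`-distance plus
`λ = inf_{h' ∈ H} (ε_s(h') + ε_t(h'))`. -/
theorem target_error_bound
    {X : Type*} [MeasurableSpace X]
    (Ps Pt : Measure X) [IsProbabilityMeasure Ps] [IsProbabilityMeasure Pt]
    (H : Set (X → Bool)) (hHne : H.Nonempty)
    (hHmeas : ∀ h ∈ H, Measurable h)
    (fs ft : X → Bool) (hfs : Measurable fs) (hft : Measurable ft)
    (h : X → Bool) (hh : h ∈ H) :
    (Pt {x | h x ≠ ft x}).toReal ≤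
      (Ps {x | h x ≠ fs x}).toReal
      + (1 / 2) * (2 * ⨆ p : H × H,
          |(Ps {x | (p.1 : X → Bool) x ≠ (p.2 : X → Bool) x}).toReal
            - (Pt {x | (p.1 : X → Bool) x ≠ (p.2 : X → Bool) x}).toReal|)
      + ⨅ h' : H, ((Ps {x | (h' : X → Bool) x ≠ fs x}).toReal
          + (Pt {x | (h' : X → Bool) x ≠ ft x}).toReal) :=
  target_error_bound_general Ps Pt H fs ft h hh
end

section
/- For every h ∈ H and every h* ∈ H, the target expected error satisfies ε_t(h) ≤ ε_s(h) + (1/2)·d_{HΔH}(P_s, P_t) + ε_s(h*) + ε_t(h*). -/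
/-!
Disagreement `μ {x | f x ≠ g x}` satisfies the triangle inequality for every measure. Passing
from `h` to `ft` through `h*` under `P_t`, then trading the `P_t`-disagreement of `h` and `h*`
for their `P_s`-disagreement at the cost of the discrepancy supremum, and finally passing from
`h` to `h*` through `fs` under `P_s` gives the bound.
-/

open MeasureTheory

section Disagreement

variable {X β : Type*} [MeasurableSpace X]

lemma measureReal_setOf_ne_le_add (μ : Measure X) [IsFiniteMeasure μ] (f g k : X → β) :
    μ.real {x | f x ≠ k x} ≤ μ.real {x | f x ≠ g x} + μ.real {x | g x ≠ k x} := by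
  have hsub : {x | f x ≠ k x} ⊆ {x | f x ≠ g x} ∪ {x | g x ≠ k x} := by
    intro x hfk
    by_contra! hfgk
    simp_all
  exact (measureReal_mono hsub).trans (measureReal_union_le _ _)

lemma abs_measureReal_sub_le_one (μ ν : Measure X) [IsProbabilityMeasure μ]
    [IsProbabilityMeasure ν] (s : Set X) : |μ.real s - ν.real s| ≤ 1 := by
  rw [abs_sub_le_iff]
  constructor <;> linarith [measureReal_le_one (μ := μ) (s := s),
    measureReal_le_one (μ := ν) (s := s), measureReal_nonneg (μ := μ) (s := s),
    measureReal_nonneg (μ := ν) (s := s)]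

lemma measureReal_setOf_ne_le_add_iSup (Ps Pt : Measure X) [IsProbabilityMeasure Ps]
    [IsProbabilityMeasure Pt] {H : Set (X → β)} {h g : X → β} (hh : h ∈ H) (hg : g ∈ H) :
    Pt.real {x | h x ≠ g x} ≤ Ps.real {x | h x ≠ g x} + ⨆ p : H × H,
      |Ps.real {x | (p.1 : X → β) x ≠ (p.2 : X → β) x}
        - Pt.real {x | (p.1 : X → β) x ≠ (p.2 : X → β) x}| := by
  have hbdd : BddAbove (Set.range fun p : H × H =>
      |Ps.real {x | (p.1 : X → β) x ≠ (p.2 : X → β) x}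
        - Pt.real {x | (p.1 : X → β) x ≠ (p.2 : X → β) x}|) :=
    ⟨1, Set.forall_mem_range.2 fun _ => abs_measureReal_sub_le_one Ps Pt _⟩
  have hle := le_ciSup hbdd (⟨h, hh⟩, ⟨g, hg⟩)
  linarith [neg_abs_le (Ps.real {x | h x ≠ g x} - Pt.real {x | h x ≠ g x})]

end Disagreement

theorem target_error_bound_pointwise_general
    {X : Type*} [MeasurableSpace X]
    (Ps Pt : Measure X) [IsProbabilityMeasure Ps] [IsProbabilityMeasure Pt]
    (H : Set (X → Bool))
    (fs ft : X → Bool)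
    (h : X → Bool) (hh : h ∈ H)
    (hstar : X → Bool) (hhstar : hstar ∈ H) :
    (Pt {x | h x ≠ ft x}).toReal ≤
      (Ps {x | h x ≠ fs x}).toReal
      + (1 / 2) * (2 * ⨆ p : H × H,
          |(Ps {x | (p.1 : X → Bool) x ≠ (p.2 : X → Bool) x}).toReal
            - (Pt {x | (p.1 : X → Bool) x ≠ (p.2 : X → Bool) x}).toReal|)
      + (Ps {x | hstar x ≠ fs x}).toReal
      + (Pt {x | hstar x ≠ ft x}).toReal := by
  simp only [← measureReal_def]
  have hsource := measureReal_setOf_ne_le_add Ps h fs hstar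
  simp only [ne_comm (a := fs _)] at hsource
  linarith [measureReal_setOf_ne_le_add Pt h hstar ft,
    measureReal_setOf_ne_le_add_iSup Ps Pt hh hhstar]

/-- For every `h ∈ H` and every `h* ∈ H`,
`ε_t(h) ≤ ε_s(h) + (1/2)·d_{HΔH}(P_s, P_t) + ε_s(h*) + ε_t(h*)`. -/
theorem target_error_bound_pointwise
    {X : Type*} [MeasurableSpace X]
    (Ps Pt : Measure X) [IsProbabilityMeasure Ps] [IsProbabilityMeasure Pt]
    (H : Set (X → Bool)) (hHne : H.Nonempty)
    (hHmeas : ∀ h ∈ H, Measurable h)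
    (fs ft : X → Bool) (hfs : Measurable fs) (hft : Measurable ft)
    (h : X → Bool) (hh : h ∈ H)
    (hstar : X → Bool) (hhstar : hstar ∈ H) :
    (Pt {x | h x ≠ ft x}).toReal ≤
      (Ps {x | h x ≠ fs x}).toReal
      + (1 / 2) * (2 * ⨆ p : H × H,
          |(Ps {x | (p.1 : X → Bool) x ≠ (p.2 : X → Bool) x}).toReal
            - (Pt {x | (p.1 : X → Bool) x ≠ (p.2 : X → Bool) x}).toReal|)
      + (Ps {x | hstar x ≠ fs x}).toReal
      + (Pt {x | hstar x ≠ ft x}).toReal :=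
  target_error_bound_pointwise_general Ps Pt H fs ft h hh hstar hhstar
end

section
/- For any measurable discriminator d : X → ℝ with 0 < d(x) < 1 for all x, if ln∘d is P-integrable and ln∘(1−d) is Q-integrable, then the discriminator objective is bounded by the Jensen–Shannon divergence: ∫ ln(d(x)) dP(x) + ∫ ln(1−d(x)) dQ(x) ≤ 2·JS(P,Q) − ln 4, where JS(P,Q) = (1/2)·KL(P ‖ M) + (1/2)·KL(Q ‖ M) with M = (1/2)(P + Q). -/
open MeasureTheory
open scoped ENNReal

/-- Kullback–Leibler divergence `KL(P ‖ M) = ∫ ln (dP/dM) dP` (as a real number,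
via the Radon–Nikodym derivative). -/
noncomputable def klDiv' {X : Type*} [MeasurableSpace X] (P M : Measure X) : ℝ :=
  ∫ x, Real.log ((P.rnDeriv M) x).toReal ∂P

/-- Jensen–Shannon divergence `JS(P,Q) = (1/2)·KL(P‖M) + (1/2)·KL(Q‖M)` with the
mixture `M = (1/2)(P + Q)`. -/
noncomputable def jsDiv' {X : Type*} [MeasurableSpace X] (P Q : Measure X) : ℝ :=
  (1 / 2) * klDiv' P ((2 : ℝ≥0∞)⁻¹ • (P + Q))
    + (1 / 2) * klDiv' Q ((2 : ℝ≥0∞)⁻¹ • (P + Q))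

lemma abs_mul_log_le_two {t : ℝ} (ht0 : 0 ≤ t) (ht2 : t ≤ 2) : |t * Real.log t| ≤ 2 := by
  rcases eq_or_lt_of_le ht0 with h0 | h0
  · simp [← h0]
  rcases le_or_gt t 1 with h1 | h1
  · have h := Real.abs_log_mul_self_lt t h0 h1
    rw [mul_comm]
    linarith [h.le]
  · have hlog0 : 0 ≤ Real.log t := Real.log_nonneg h1.le
    have hlog : Real.log t ≤ t - 1 := Real.log_le_sub_one_of_pos h0
    rw [abs_of_nonneg (by positivity)]
    nlinarith

lemma aux_discr {X : Type*} [MeasurableSpace X]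
    (P M : Measure X) [IsProbabilityMeasure P] [IsProbabilityMeasure M]
    (hPM : P ≪ M) (hf2 : ∀ᵐ x ∂M, P.rnDeriv M x ≤ 2)
    (u : X → ℝ) (hu : Measurable u) (hu0 : ∀ x, 0 < u x) (hu1 : ∀ x, u x ≤ 1)
    (hint : Integrable (fun x => Real.log (u x)) P) :
    ∫ x, Real.log (u x) ∂P ≤
      klDiv' P M - Real.log 2 + (2 * ∫ x, u x ∂M - 1) := by
  set f : X → ℝ := fun x => (P.rnDeriv M x).toReal with hf_def
  have hmeasf : Measurable f := (Measure.measurable_rnDeriv P M).ennreal_toReal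
  have hf2' : ∀ᵐ x ∂M, f x ≤ 2 := by
    filter_upwards [hf2] with x hx
    have := ENNReal.toReal_mono (by norm_num) hx
    simpa using this
  -- integrability of `log f` w.r.t. `P`
  have hlogf_int : Integrable (fun x => Real.log (f x)) P := by
    rw [← integrable_rnDeriv_smul_iff hPM]
    refine Integrable.mono' (integrable_const (2 : ℝ)) ?_ ?_
    · exact ((hmeasf.mul (Real.measurable_log.comp hmeasf))).aestronglyMeasurable
    · filter_upwards [hf2'] with x hx
      rw [smul_eq_mul, Real.norm_eq_abs]
      exact abs_mul_log_le_two ENNReal.toReal_nonneg hx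
  -- integrability of `u / f` w.r.t. `P`
  have habs : ∀ x, |f x * (u x * (f x)⁻¹)| ≤ 1 := by
    intro x
    rcases eq_or_ne (f x) 0 with h0 | h0
    · simp [h0]
    · have hfx : 0 < f x := lt_of_le_of_ne ENNReal.toReal_nonneg (Ne.symm h0)
      rw [show f x * (u x * (f x)⁻¹) = u x by field_simp]
      rw [abs_of_nonneg (hu0 x).le]
      exact hu1 x
  have hsmul_int : Integrable (fun x => f x • (u x * (f x)⁻¹)) M := by
    refine Integrable.mono' (integrable_const (1 : ℝ)) ?_ ?_
    · exact (hmeasf.mul (hu.mul (hmeasf.inv))).aestronglyMeasurable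
    · filter_upwards with x
      rw [smul_eq_mul, Real.norm_eq_abs]
      exact habs x
  have hdf_int : Integrable (fun x => u x * (f x)⁻¹) P :=
    (integrable_rnDeriv_smul_iff hPM).mp hsmul_int
  -- pointwise inequality, `P`-a.e.
  have hae : ∀ᵐ x ∂P, Real.log (u x) ≤
      Real.log (f x) - Real.log 2 + (2 * (u x * (f x)⁻¹) - 1) := by
    filter_upwards [Measure.rnDeriv_pos hPM, hPM.ae_le (Measure.rnDeriv_ne_top P M)]
      with x hpos htop
    have hfx : 0 < f x := ENNReal.toReal_pos hpos.ne' htop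
    have hux := hu0 x
    have key : Real.log (2 * u x / f x) ≤ 2 * u x / f x - 1 :=
      Real.log_le_sub_one_of_pos (by positivity)
    have hexp : Real.log (2 * u x / f x)
        = Real.log 2 + Real.log (u x) - Real.log (f x) := by
      rw [Real.log_div (by positivity) hfx.ne', Real.log_mul two_ne_zero (hu0 x).ne']
    have hdiv : 2 * u x / f x = 2 * (u x * (f x)⁻¹) := by ring
    rw [hexp, hdiv] at key
    linarith
  -- integrate
  have hA : Integrable (fun x => Real.log (f x) - Real.log 2) P :=
    hlogf_int.sub (integrable_const _)
  have hB : Integrable (fun x => 2 * (u x * (f x)⁻¹) - 1) P :=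
    (hdf_int.const_mul 2).sub (integrable_const _)
  have hint_rhs : Integrable (fun x =>
      Real.log (f x) - Real.log 2 + (2 * (u x * (f x)⁻¹) - 1)) P := hA.add hB
  have h1 : ∫ x, Real.log (u x) ∂P ≤
      ∫ x, (Real.log (f x) - Real.log 2 + (2 * (u x * (f x)⁻¹) - 1)) ∂P :=
    integral_mono_ae hint hint_rhs hae
  have h2 : ∫ x, (Real.log (f x) - Real.log 2 + (2 * (u x * (f x)⁻¹) - 1)) ∂P
      = ∫ x, Real.log (f x) ∂P - Real.log 2 + (2 * ∫ x, u x * (f x)⁻¹ ∂P - 1) := by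
    rw [integral_add hA hB, integral_sub hlogf_int (integrable_const _),
      integral_sub (hdf_int.const_mul 2) (integrable_const _),
      integral_const_mul, integral_const]
    simp
  -- change of measure for the `u/f` integral
  have hu_int : Integrable u M := by
    refine Integrable.mono' (integrable_const (1 : ℝ)) hu.aestronglyMeasurable ?_
    filter_upwards with x
    rw [Real.norm_eq_abs, abs_of_nonneg (hu0 x).le]
    exact hu1 x
  have h3 : ∫ x, u x * (f x)⁻¹ ∂P ≤ ∫ x, u x ∂M := by
    rw [← integral_rnDeriv_smul hPM (f := fun x => u x * (f x)⁻¹)]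
    refine integral_mono hsmul_int hu_int ?_
    intro x
    show f x • (u x * (f x)⁻¹) ≤ u x
    rcases eq_or_ne (f x) 0 with h0 | h0
    · simp [smul_eq_mul, h0, (hu0 x).le]
    · have hfx : 0 < f x := lt_of_le_of_ne ENNReal.toReal_nonneg (Ne.symm h0)
      rw [smul_eq_mul, show f x * (u x * (f x)⁻¹) = u x by field_simp]
  have hkl : klDiv' P M = ∫ x, Real.log (f x) ∂P := rfl
  rw [hkl]
  linarith

/-- For any measurable discriminator `d` with values in `(0,1)`, if `ln ∘ d` is
`P`-integrable and `ln ∘ (1−d)` is `Q`-integrable, the discriminator objective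
is bounded by `2·JS(P,Q) − ln 4`. -/
theorem discriminator_objective_le_js
    {X : Type*} [MeasurableSpace X]
    (P Q : Measure X) [IsProbabilityMeasure P] [IsProbabilityMeasure Q]
    (d : X → ℝ) (hd : Measurable d)
    (hd0 : ∀ x, 0 < d x) (hd1 : ∀ x, d x < 1)
    (hintP : Integrable (fun x => Real.log (d x)) P)
    (hintQ : Integrable (fun x => Real.log (1 - d x)) Q) :
    (∫ x, Real.log (d x) ∂P) + (∫ x, Real.log (1 - d x) ∂Q) ≤
      2 * jsDiv' P Q - Real.log 4 := by
  set M : Measure X := (2 : ℝ≥0∞)⁻¹ • (P + Q) with hM_def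
  have hMprob : IsProbabilityMeasure M := by
    constructor
    simp [hM_def, Measure.smul_apply, measure_univ, smul_eq_mul]
    exact ENNReal.inv_two_add_inv_two
  have hPQM : P + Q = (2 : ℝ≥0∞) • M := by
    rw [hM_def, smul_smul, ENNReal.mul_inv_cancel (by norm_num) (by norm_num), one_smul]
  have hPM : P ≪ M := by
    refine (Measure.absolutelyContinuous_of_le (Measure.le_add_right le_rfl) : P ≪ P + Q).trans ?_
    rw [hM_def]
    exact Measure.absolutelyContinuous_smul (by norm_num)
  have hQM : Q ≪ M := by
    refine (Measure.absolutelyContinuous_of_le (Measure.le_add_left le_rfl) : Q ≪ P + Q).trans ?_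
    rw [hM_def]
    exact Measure.absolutelyContinuous_smul (by norm_num)
  -- rnDeriv bound
  have hsum2 : ∀ᵐ x ∂M, P.rnDeriv M x + Q.rnDeriv M x = 2 := by
    have hadd := Measure.rnDeriv_add' P Q M
    have hsmul := Measure.rnDeriv_smul_left_of_ne_top M M (r := 2) (by norm_num)
    have hself := Measure.rnDeriv_self M
    rw [← hPQM] at hsmul
    filter_upwards [hadd, hsmul, hself] with x h1 h2 h3
    rw [Pi.add_apply] at h1
    rw [← h1, h2, Pi.smul_apply, h3]
    simp
  have hf2P : ∀ᵐ x ∂M, P.rnDeriv M x ≤ 2 := by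
    filter_upwards [hsum2] with x hx
    calc P.rnDeriv M x ≤ P.rnDeriv M x + Q.rnDeriv M x := le_self_add
    _ = 2 := hx
  have hf2Q : ∀ᵐ x ∂M, Q.rnDeriv M x ≤ 2 := by
    filter_upwards [hsum2] with x hx
    calc Q.rnDeriv M x ≤ P.rnDeriv M x + Q.rnDeriv M x := le_add_self
    _ = 2 := hx
  have h1 := aux_discr P M hPM hf2P d hd hd0 (fun x => (hd1 x).le) hintP
  have h2 : ∫ x, Real.log (1 - d x) ∂Q ≤
      klDiv' Q M - Real.log 2 + (2 * ∫ x, (1 - d x) ∂M - 1) :=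
    aux_discr Q M hQM hf2Q (fun x => 1 - d x) (measurable_const.sub hd)
      (fun x => show (0:ℝ) < 1 - d x by linarith [hd1 x])
      (fun x => show (1:ℝ) - d x ≤ 1 by linarith [hd0 x]) hintQ
  -- ∫ d dM + ∫ (1-d) dM = 1
  have hd_int : Integrable d M := by
    refine Integrable.mono' (integrable_const (1 : ℝ)) hd.aestronglyMeasurable ?_
    filter_upwards with x
    rw [Real.norm_eq_abs, abs_of_nonneg (hd0 x).le]
    exact (hd1 x).le
  have hsum1 : ∫ x, d x ∂M + ∫ x, (1 - d x) ∂M = 1 := by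
    rw [integral_sub (integrable_const _) hd_int, integral_const]
    simp
  have hjs : 2 * jsDiv' P Q = klDiv' P M + klDiv' Q M := by
    rw [jsDiv']
    ring
  have hlog4 : Real.log 4 = 2 * Real.log 2 := by
    rw [show (4 : ℝ) = 2 ^ 2 by norm_num, Real.log_pow]
    push_cast
    ring
  rw [hjs, hlog4]
  linarith
end

section
/- The optimal discriminator attains the Jensen–Shannon divergence: if P and Q are probability measures on X that are absolutely continuous with respect to a σ-finite measure μ with densities p and q satisfying p(x) + q(x) > 0 μ-almost everywhere, then the discriminator d*(x) = p(x)/(p(x)+q(x)) satisfies ∫ ln(d*(x)) dP(x) + ∫ ln(1−d*(x)) dQ(x) = 2·JS(P,Q) − ln 4, where JS(P,Q) = (1/2)·KL(P ‖ M) + (1/2)·KL(Q ‖ M) with M = (1/2)(P + Q). -/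
/-! The density of `P` with respect to the mixture `M = (P + Q) / 2` is `2p / (p + q) = 2 d*`,
so `KL(P ‖ M) = ∫ ln d* dP + ln 2`; symmetrically `KL(Q ‖ M) = ∫ ln (1 - d*) dQ + ln 2`,
because `1 - d* = q / (q + p)` holds `Q`-a.e. Adding the two gives `2 JS(P, Q) = objective + ln 4`.
The logarithms are `P`-integrable because `p |ln (p / (p + q))| ≤ q`. -/

open MeasureTheory
open scoped ENNReal

open Real

lemma Real.abs_mul_log_div_add_le {a b : ℝ} (ha : 0 ≤ a) (hb : 0 ≤ b) :
    |a * log (a / (a + b))| ≤ b := by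
  rcases ha.eq_or_lt with rfl | ha
  · simpa using hb
  have hfrac : 0 < a / (a + b) := by positivity
  have hlog_nonpos : log (a / (a + b)) ≤ 0 :=
    log_nonpos hfrac.le (div_le_one_of_le₀ (by linarith) (by positivity))
  have hlog_ge : -(b / a) ≤ log (a / (a + b)) := by
    have h := one_sub_inv_le_log_of_pos hfrac
    rwa [inv_div, show 1 - (a + b) / a = -(b / a) by field_simp; ring] at h
  rw [abs_mul, abs_of_pos ha, abs_of_nonpos hlog_nonpos]
  calc a * -log (a / (a + b)) ≤ a * (b / a) := by gcongr; linarith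
    _ = b := mul_div_cancel₀ b ha.ne'

lemma MeasureTheory.Measure.rnDeriv_ae_eq_of_eq_withDensity {X : Type*} [MeasurableSpace X]
    {P M : Measure X} [SigmaFinite M] {f : X → ℝ≥0∞} (hf : Measurable f)
    (h : P = M.withDensity f) :
    P.rnDeriv M =ᵐ[P] f := by
  subst h
  exact (withDensity_absolutelyContinuous M f).ae_le (Measure.rnDeriv_withDensity M hf)

section Densities

variable {X : Type*} [MeasurableSpace X] {μ : Measure X} {p q : X → ℝ}

lemma ae_pos_withDensity_ofReal (hp : Measurable p) :
    ∀ᵐ x ∂μ.withDensity (fun x => ENNReal.ofReal (p x)), 0 < p x :=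
  (ae_withDensity_iff hp.ennreal_ofReal).2 <|
    ae_of_all _ fun _ h => ENNReal.ofReal_pos.1 (pos_iff_ne_zero.2 h)

lemma integrable_of_isFiniteMeasure_withDensity_ofReal (hq : AEStronglyMeasurable q μ)
    (hq0 : 0 ≤ᵐ[μ] q) [IsFiniteMeasure (μ.withDensity fun x => ENNReal.ofReal (q x))] :
    Integrable q μ := by
  refine ⟨hq, (hasFiniteIntegral_iff_ofReal hq0).2 ?_⟩
  rw [← setLIntegral_univ, ← withDensity_apply _ MeasurableSet.univ]
  exact measure_lt_top _ _

lemma integrable_log_div_add (hp : Measurable p) (hq : Measurable q) (hp0 : ∀ x, 0 ≤ p x)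
    (hq0 : ∀ x, 0 ≤ q x) (hqi : Integrable q μ) :
    Integrable (fun x => log (p x / (p x + q x)))
      (μ.withDensity fun x => ENNReal.ofReal (p x)) := by
  rw [integrable_withDensity_iff_integrable_smul' hp.ennreal_ofReal
    (ae_of_all _ fun _ => ENNReal.ofReal_lt_top)]
  simp only [ENNReal.toReal_ofReal (hp0 _), smul_eq_mul]
  refine hqi.mono' (by fun_prop) (ae_of_all _ fun x => ?_)
  exact (norm_eq_abs _).trans_le (abs_mul_log_div_add_le (hp0 x) (hq0 x))

lemma smul_add_withDensity_ofReal (hp : Measurable p) (hp0 : ∀ x, 0 ≤ p x)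
    (hq0 : ∀ x, 0 ≤ q x) :
    (2 : ℝ≥0∞)⁻¹ • (μ.withDensity (fun x => ENNReal.ofReal (p x))
      + μ.withDensity (fun x => ENNReal.ofReal (q x)))
      = μ.withDensity fun x => ENNReal.ofReal ((p x + q x) / 2) := by
  rw [← withDensity_add_left hp.ennreal_ofReal, ← withDensity_smul' _ _ (by simp)]
  congr 1
  ext x
  rw [Pi.smul_apply, Pi.add_apply, ← ENNReal.ofReal_add (hp0 x) (hq0 x), div_eq_inv_mul,
    ENNReal.ofReal_mul (by norm_num), ENNReal.ofReal_inv_of_pos two_pos, ENNReal.ofReal_ofNat,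
    smul_eq_mul]

lemma withDensity_ofReal_eq_mixture_withDensity (hp : Measurable p) (hq : Measurable q)
    (hp0 : ∀ x, 0 ≤ p x) (hq0 : ∀ x, 0 ≤ q x) :
    μ.withDensity (fun x => ENNReal.ofReal (p x))
      = ((2 : ℝ≥0∞)⁻¹ • (μ.withDensity (fun x => ENNReal.ofReal (p x))
          + μ.withDensity (fun x => ENNReal.ofReal (q x)))).withDensity
        fun x => ENNReal.ofReal (2 * p x / (p x + q x)) := by
  rw [smul_add_withDensity_ofReal hp hp0 hq0, ← withDensity_mul μ (by fun_prop) (by fun_prop)]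
  congr 1
  ext x
  rw [Pi.mul_apply, ← ENNReal.ofReal_mul (by linarith [hp0 x, hq0 x])]
  rcases (add_nonneg (hp0 x) (hq0 x)).eq_or_lt with hsum | hsum
  · have hpx : p x = 0 := by linarith [hp0 x, hq0 x]
    simp [hpx]
  · congr 1
    field_simp

lemma klDiv'_mixture_eq (hp : Measurable p) (hq : Measurable q) (hp0 : ∀ x, 0 ≤ p x)
    (hq0 : ∀ x, 0 ≤ q x) {P Q : Measure X} [IsProbabilityMeasure P] [IsFiniteMeasure Q]
    (hP : P = μ.withDensity fun x => ENNReal.ofReal (p x))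
    (hQ : Q = μ.withDensity fun x => ENNReal.ofReal (q x)) :
    klDiv' P ((2 : ℝ≥0∞)⁻¹ • (P + Q)) = (∫ x, log (p x / (p x + q x)) ∂P) + log 2 := by
  have := Measure.smul_finite (P + Q) (by simp : (2 : ℝ≥0∞)⁻¹ ≠ ∞)
  have : IsFiniteMeasure (μ.withDensity fun x => ENNReal.ofReal (q x)) :=
    hQ ▸ inferInstance
  have hqi : Integrable q μ :=
    integrable_of_isFiniteMeasure_withDensity_ofReal hq.aestronglyMeasurable (ae_of_all _ hq0)
  have hint : Integrable (fun x => log (p x / (p x + q x))) P :=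
    hP ▸ integrable_log_div_add hp hq hp0 hq0 hqi
  have hrn : P.rnDeriv ((2 : ℝ≥0∞)⁻¹ • (P + Q)) =ᵐ[P]
      fun x => ENNReal.ofReal (2 * p x / (p x + q x)) :=
    Measure.rnDeriv_ae_eq_of_eq_withDensity (by fun_prop) <| by
      subst hP hQ
      exact withDensity_ofReal_eq_mixture_withDensity hp hq hp0 hq0
  have hlog : ∀ᵐ x ∂P, log (P.rnDeriv ((2 : ℝ≥0∞)⁻¹ • (P + Q)) x).toReal
      = log (p x / (p x + q x)) + log 2 := by
    filter_upwards [hrn, hP ▸ ae_pos_withDensity_ofReal hp] with x hrnx hpx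
    have hqx := hq0 x
    rw [hrnx, ENNReal.toReal_ofReal (by positivity), mul_div_assoc,
      log_mul two_ne_zero (by positivity), add_comm]
  rw [klDiv', integral_congr_ae hlog, integral_add hint (integrable_const _)]
  simp

end Densities

theorem optimal_discriminator_attains_js_general
    {X : Type*} [MeasurableSpace X]
    (μ : Measure X)
    (p q : X → ℝ) (hp : Measurable p) (hq : Measurable q)
    (hp0 : ∀ x, 0 ≤ p x) (hq0 : ∀ x, 0 ≤ q x)
    (P Q : Measure X) [IsProbabilityMeasure P] [IsProbabilityMeasure Q]
    (hP : P = μ.withDensity fun x => ENNReal.ofReal (p x))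
    (hQ : Q = μ.withDensity fun x => ENNReal.ofReal (q x)) :
    (∫ x, Real.log (p x / (p x + q x)) ∂P)
      + (∫ x, Real.log (1 - p x / (p x + q x)) ∂Q) =
      2 * jsDiv' P Q - Real.log 4 := by
  have hklP := klDiv'_mixture_eq hp hq hp0 hq0 hP hQ
  have hklQ := klDiv'_mixture_eq hq hp hq0 hp0 hQ hP
  rw [add_comm Q P] at hklQ
  have hdiscQ : ∫ x, log (1 - p x / (p x + q x)) ∂Q = ∫ x, log (q x / (q x + p x)) ∂Q := by
    refine integral_congr_ae ?_
    filter_upwards [hQ ▸ ae_pos_withDensity_ofReal hq] with x hqx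
    have hpx := hp0 x
    rw [one_sub_div (by positivity), add_sub_cancel_left, add_comm (q x)]
  rw [hdiscQ, jsDiv', hklP, hklQ, show (4 : ℝ) = 2 ^ 2 by norm_num, log_pow]
  push_cast
  ring

/-- The optimal discriminator `d*(x) = p(x)/(p(x)+q(x))` attains the
Jensen–Shannon divergence: its objective equals `2·JS(P,Q) − ln 4`. -/
theorem optimal_discriminator_attains_js
    {X : Type*} [MeasurableSpace X]
    (μ : Measure X) [SigmaFinite μ]
    (p q : X → ℝ) (hp : Measurable p) (hq : Measurable q)
    (hp0 : ∀ x, 0 ≤ p x) (hq0 : ∀ x, 0 ≤ q x)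
    (P Q : Measure X) [IsProbabilityMeasure P] [IsProbabilityMeasure Q]
    (hP : P = μ.withDensity fun x => ENNReal.ofReal (p x))
    (hQ : Q = μ.withDensity fun x => ENNReal.ofReal (q x))
    (hpos : ∀ᵐ x ∂μ, 0 < p x + q x) :
    (∫ x, Real.log (p x / (p x + q x)) ∂P)
      + (∫ x, Real.log (1 - p x / (p x + q x)) ∂Q) =
      2 * jsDiv' P Q - Real.log 4 :=
  optimal_discriminator_attains_js_general μ p q hp hq hp0 hq0 P Q hP hQ
end
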